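/- Let φ: ℝⁿ → ℝ ∪ {∞} be a convex piecewise linear-quadratic function with representation dom φ = ⋃_{i=1}^{s} Ω_i (Ω_i polyhedral convex). For any x̄ ∈ dom φ and any w ∈ dom dφ(x̄) (equivalently w ∈ T_{dom φ}(x̄)), the second-order tangent set satisfies T²_{dom φ}(x̄, w) = ⋃_{i ∈ J(x̄,w)} T²_{Ω_i}(x̄, w), where J(x̄,w) = {i : x̄ ∈ Ω_i and w ∈ T_{Ω_i}(x̄)}. -/

import Mathlib

open Filter Topology Metric Set

noncomputable section

abbrev Euc (n : ℕ) := EuclideanSpace ℝ (Fin n)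

def edom {X : Type*} (φ : X → EReal) : Set X := {x | φ x ≠ ⊤}

section NormedDefs

variable {X Y : Type*} [NormedAddCommGroup X] [NormedSpace ℝ X]
  [NormedAddCommGroup Y] [NormedSpace ℝ Y]

/-- Bouligand (contingent) tangent cone. -/
def tangentConeB (Ω : Set X) (x : X) : Set X :=
  {w | ∃ t : ℕ → ℝ, ∃ wk : ℕ → X, (∀ k, 0 < t k) ∧ Tendsto t atTop (𝓝 0) ∧
      Tendsto wk atTop (𝓝 w) ∧ ∀ k, x + t k • wk k ∈ Ω}

/-- Second-order tangent set. -/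
def secondTangent (Ω : Set X) (x w : X) : Set X :=
  {u | ∃ t : ℕ → ℝ, ∃ uk : ℕ → X, (∀ k, 0 < t k) ∧ Tendsto t atTop (𝓝 0) ∧
      Tendsto uk atTop (𝓝 u) ∧ ∀ k, x + t k • w + ((t k) ^ 2 / 2) • uk k ∈ Ω}

/-- Subderivative (first-order epi-derivative). -/
def subderiv (φ : X → EReal) (x w : X) : EReal :=
  liminf (fun p : ℝ × X => ((p.1⁻¹ : ℝ) : EReal) * (φ (x + p.1 • p.2) - φ x))
    ((𝓝[>] (0:ℝ)) ×ˢ 𝓝 w)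

/-- `f` is twice differentiable at `x`: differentiable nearby and its derivative is
differentiable at `x`. -/
def TwiceDiffAt (f : X → Y) (x : X) : Prop :=
  (∀ᶠ y in 𝓝 x, DifferentiableAt ℝ f y) ∧ DifferentiableAt ℝ (fderiv ℝ f) x

/-- The second derivative of `f` at `x` evaluated at `(w, w)`. -/
def D2 (f : X → Y) (x w : X) : Y := fderiv ℝ (fderiv ℝ f) x w w

/-- Lipschitz continuity of `φ` around `x` relative to its domain, with constant `ℓ`. -/
def LipRelDom (φ : X → EReal) (x : X) (ℓ : ℝ) : Prop :=
  ∃ U ∈ 𝓝 x, ∀ y ∈ U, ∀ z ∈ U, φ y ≠ ⊤ → φ z ≠ ⊤ →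
    φ y ≤ φ z + ((ℓ * ‖y - z‖ : ℝ) : EReal)

/-- Metric subregularity of the mapping `x ↦ f x - D` at `(x, 0)` with constant `κ`:
the metric subregularity qualification condition. -/
def MSQCAt (f : X → Y) (D : Set Y) (x : X) (κ : ℝ) : Prop :=
  0 ≤ κ ∧ ∀ᶠ u in 𝓝 x, Metric.infDist u (f ⁻¹' D) ≤ κ * Metric.infDist (f u) D

/-- Epigraph of an extended-real-valued function. -/
def epiSet (ϑ : Y → EReal) : Set (Y × ℝ) := {p | ϑ p.1 ≤ (p.2 : EReal)}

end NormedDefs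

section InnerDefs

variable {X : Type*} [NormedAddCommGroup X] [InnerProductSpace ℝ X]

/-- Regular (Fréchet) subdifferential. -/
def frechetSubdiff (φ : X → EReal) (x : X) : Set X :=
  {v | ∀ ε : ℝ, 0 < ε → ∀ᶠ y in 𝓝 x,
      φ x + (((inner ℝ v (y - x) : ℝ) - ε * ‖y - x‖ : ℝ) : EReal) ≤ φ y}

/-- Limiting (Mordukhovich) subdifferential. -/
def limSubdiff (φ : X → EReal) (x : X) : Set X :=
  {v | ∃ xk : ℕ → X, ∃ vk : ℕ → X, Tendsto xk atTop (𝓝 x) ∧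
      Tendsto (fun k => φ (xk k)) atTop (𝓝 (φ x)) ∧
      Tendsto vk atTop (𝓝 v) ∧ ∀ k, vk k ∈ frechetSubdiff φ (xk k)}

/-- Proximal subdifferential. -/
def proxSubdiff (φ : X → EReal) (x : X) : Set X :=
  {v | ∃ r > (0:ℝ), ∃ γ > (0:ℝ), ∀ y ∈ Metric.ball x γ,
      φ x + (((inner ℝ v (y - x) : ℝ) - r / 2 * ‖y - x‖ ^ 2 : ℝ) : EReal) ≤ φ y}

/-- Second-order difference quotient. -/
def quadDiff (φ : X → EReal) (x v : X) (t : ℝ) (u : X) : EReal :=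
  ((2 / t ^ 2 : ℝ) : EReal) * (φ (x + t • u) - φ x - ((t * (inner ℝ v u : ℝ) : ℝ) : EReal))

/-- Second subderivative of `φ` at `x` for `v`. -/
def secondSubderiv (φ : X → EReal) (x v w : X) : EReal :=
  liminf (fun p : ℝ × X => quadDiff φ x v p.1 p.2) ((𝓝[>] (0:ℝ)) ×ˢ 𝓝 w)

/-- Parabolic subderivative of `φ` at `x` for `w` with respect to `z`. -/
def parabolicSubderiv (φ : X → EReal) (x w z : X) : EReal :=
  liminf (fun p : ℝ × X =>
      ((2 / p.1 ^ 2 : ℝ) : EReal) *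
        (φ (x + p.1 • w + (p.1 ^ 2 / 2) • p.2) - φ x - (p.1 : EReal) * subderiv φ x w))
    ((𝓝[>] (0:ℝ)) ×ˢ 𝓝 z)

/-- Critical cone of `φ` at `x` for `v`. -/
def critCone (φ : X → EReal) (x v : X) : Set X :=
  {w | subderiv φ x w = ((inner ℝ v w : ℝ) : EReal)}

/-- Convex polyhedral set. -/
def IsPolyhedral (Ω : Set X) : Prop :=
  ∃ (k : ℕ) (c : Fin k → X) (b : Fin k → ℝ), Ω = {x | ∀ i, (inner ℝ (c i) x : ℝ) ≤ b i}

/-- Polar cone. -/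
def polarCone (C : Set X) : Set X := {y | ∀ u ∈ C, (inner ℝ y u : ℝ) ≤ 0}

/-- A piecewise linear-quadratic representation of `ϑ`. -/
structure PLQRepr (ϑ : X → EReal) where
  s : ℕ
  piece : Fin s → Set X
  A : Fin s → (X →L[ℝ] X)
  a : Fin s → X
  cst : Fin s → ℝ
  poly : ∀ i, IsPolyhedral (piece i)
  symm : ∀ i x y, (inner ℝ (A i x) y : ℝ) = (inner ℝ x (A i y) : ℝ)
  dom_eq : edom ϑ = ⋃ i, piece i
  val : ∀ i, ∀ x ∈ piece i,
    ϑ x = ((1 / 2 * (inner ℝ (A i x) x : ℝ) + (inner ℝ (a i) x : ℝ) + cst i : ℝ) : EReal)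

/-- `ϑ` is piecewise linear-quadratic. -/
def IsPLQ (ϑ : X → EReal) : Prop := Nonempty (PLQRepr ϑ)

/-- Twice epi-differentiability of `φ` at `x` for `v`, via the recovery-sequence
characterization of epi-convergence of second-order difference quotients. -/
def TwiceEpiDiffAt (φ : X → EReal) (x v : X) : Prop :=
  ∀ w : X, ∀ t : ℕ → ℝ, (∀ k, 0 < t k) → Tendsto t atTop (𝓝 0) →
    ∃ wk : ℕ → X, Tendsto wk atTop (𝓝 w) ∧
      Tendsto (fun k => quadDiff φ x v (t k) (wk k)) atTop (𝓝 (secondSubderiv φ x v w))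

end InnerDefs

/-- Convexity for extended-real-valued functions. -/
def ERealConvexOn {X : Type*} [AddCommGroup X] [Module ℝ X] (φ : X → EReal) : Prop :=
  ∀ x y : X, ∀ t : ℝ, 0 ≤ t → t ≤ 1 →
    φ (t • x + (1 - t) • y) ≤ (t : EReal) * φ x + ((1 - t : ℝ) : EReal) * φ y

/-- The Lagrange multiplier set associated with `(x, v)` for the composition `ϑ ∘ f`. -/
def multSet {n m : ℕ} (f : Euc n → Euc m) (ϑ : Euc m → EReal) (x : Euc n) (v : Euc n) :
    Set (Euc m) :=
  {lam | lam ∈ limSubdiff ϑ (f x) ∧ ContinuousLinearMap.adjoint (fderiv ℝ f x) lam = v}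

/-! Of finitely many sets, one contains infinitely many points `x + tₖ w + ½ tₖ² uₖ` of a
given sequence; passing to that subsequence shows that the second-order tangent set of a finite
union is the union of the second-order tangent sets. A polyhedral piece is closed, so it contains
the limit `x̄`, and `w` is tangent to it since `x̄ + tₖ (w + ½ tₖ uₖ)` lies in it. -/

lemma IsPolyhedral.isClosed {X : Type*} [NormedAddCommGroup X] [InnerProductSpace ℝ X]
    {Ω : Set X} (h : IsPolyhedral Ω) : IsClosed Ω := by
  obtain ⟨k, c, b, rfl⟩ := h
  simp only [ofPred_forall]
  exact isClosed_iInter fun i =>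
    isClosed_le (continuous_const.inner continuous_id) continuous_const

section SecondTangent

variable {X : Type*} [NormedAddCommGroup X] [NormedSpace ℝ X]

lemma secondTangent_mono {Ω Ω' : Set X} (h : Ω ⊆ Ω') (x w : X) :
    secondTangent Ω x w ⊆ secondTangent Ω' x w := by
  rintro u ⟨t, uk, ht, ht0, huk, hmem⟩
  exact ⟨t, uk, ht, ht0, huk, fun k => h (hmem k)⟩

lemma mem_secondTangent_of_frequently {Ω : Set X} {x w u : X} {t : ℕ → ℝ} {uk : ℕ → X}
    (ht : ∀ k, 0 < t k) (ht0 : Tendsto t atTop (𝓝 0)) (huk : Tendsto uk atTop (𝓝 u))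
    (hmem : ∃ᶠ k in atTop, x + t k • w + (t k ^ 2 / 2) • uk k ∈ Ω) :
    u ∈ secondTangent Ω x w := by
  obtain ⟨g, hg, hgmem⟩ := extraction_of_frequently_atTop hmem
  exact ⟨t ∘ g, uk ∘ g, fun k => ht _, ht0.comp hg.tendsto_atTop,
    huk.comp hg.tendsto_atTop, hgmem⟩

theorem secondTangent_iUnion {ι : Type*} [Finite ι] (Ω : ι → Set X) (x w : X) :
    secondTangent (⋃ i, Ω i) x w = ⋃ i, secondTangent (Ω i) x w := by
  refine Subset.antisymm ?_ (iUnion_subset fun i => secondTangent_mono (subset_iUnion Ω i) x w)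
  rintro u ⟨t, uk, ht, ht0, huk, hmem⟩
  have hfreq : ∃ᶠ k in atTop, ∃ i, x + t k • w + (t k ^ 2 / 2) • uk k ∈ Ω i :=
    Frequently.of_forall fun k => mem_iUnion.mp (hmem k)
  obtain ⟨i, hi⟩ := frequently_exists.mp hfreq
  exact mem_iUnion.mpr ⟨i, mem_secondTangent_of_frequently ht ht0 huk hi⟩

lemma tendsto_secondOrderCurve {x w u : X} {t : ℕ → ℝ} {uk : ℕ → X}
    (ht0 : Tendsto t atTop (𝓝 0)) (huk : Tendsto uk atTop (𝓝 u)) :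
    Tendsto (fun k => x + t k • w + (t k ^ 2 / 2) • uk k) atTop (𝓝 x) := by
  have h : Tendsto (fun k => x + t k • w + (t k ^ 2 / 2) • uk k) atTop
      (𝓝 (x + (0 : ℝ) • w + ((0 : ℝ) ^ 2 / 2) • u)) :=
    (tendsto_const_nhds.add (ht0.smul_const w)).add (((ht0.pow 2).div_const 2).smul huk)
  simpa using h

lemma IsClosed.mem_of_mem_secondTangent {Ω : Set X} (hΩ : IsClosed Ω) {x w u : X}
    (hu : u ∈ secondTangent Ω x w) : x ∈ Ω := by
  obtain ⟨t, uk, -, ht0, huk, hmem⟩ := hu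
  exact hΩ.mem_of_tendsto (tendsto_secondOrderCurve ht0 huk) (Eventually.of_forall hmem)

lemma mem_tangentConeB_of_mem_secondTangent {Ω : Set X} {x w u : X}
    (hu : u ∈ secondTangent Ω x w) : w ∈ tangentConeB Ω x := by
  obtain ⟨t, uk, ht, ht0, huk, hmem⟩ := hu
  refine ⟨t, fun k => w + (t k / 2) • uk k, ht, ht0, ?_, fun k => ?_⟩
  · simpa using tendsto_const_nhds.add ((ht0.div_const 2).smul huk)
  · convert hmem k using 1
    rw [smul_add, smul_smul, ← add_assoc]
    ring_nf

end SecondTangent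

theorem stmt2_general {n : ℕ} (φ : Euc n → EReal)
    (R : PLQRepr φ)
    (xb : Euc n) (w : Euc n) :
    secondTangent (edom φ) xb w =
      ⋃ i ∈ {i : Fin R.s | xb ∈ R.piece i ∧ w ∈ tangentConeB (R.piece i) xb},
        secondTangent (R.piece i) xb w := by
  rw [R.dom_eq, secondTangent_iUnion]
  ext u
  simp only [mem_iUnion, mem_ofPred_eq, exists_prop]
  constructor
  · rintro ⟨i, hu⟩
    exact ⟨i, ⟨(R.poly i).isClosed.mem_of_mem_secondTangent hu,
      mem_tangentConeB_of_mem_secondTangent hu⟩, hu⟩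
  · rintro ⟨i, -, hu⟩
    exact ⟨i, hu⟩

/-- second-order tangent sets to domains of convex PWLQ functions. -/
theorem stmt2 {n : ℕ} (φ : Euc n → EReal) (hbot : ∀ x, φ x ≠ ⊥)
    (R : PLQRepr φ) (hconv : ERealConvexOn φ)
    (xb : Euc n) (hxb : φ xb ≠ ⊤) (w : Euc n)
    (hw : w ∈ tangentConeB (edom φ) xb) :
    secondTangent (edom φ) xb w =
      ⋃ i ∈ {i : Fin R.s | xb ∈ R.piece i ∧ w ∈ tangentConeB (R.piece i) xb},
        secondTangent (R.piece i) xb w :=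
  stmt2_general φ R xb w
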